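/- arXiv:1211.0722 — 2 statements merged into one kernel-verified Lean document; each statement's English description precedes it below -/
import Mathlib

section
/- Let h : ℝ → ℂ and let φ(t) = ∑_{ℓ=0}^{L-1} α_ℓ h(t - τ_ℓ) with α_ℓ ∈ ℂ and τ_ℓ ∈ [0, τ). If h is integrable and supported in [0, τ - max_ℓ τ_ℓ], then the k-th Fourier series coefficient of φ on [0, τ], c[k] = (1/τ)∫_0^τ φ(t) e^{-j2πkt/τ} dt, equals (1/τ) H(2πk/τ) ∑_{ℓ=0}^{L-1} α_ℓ e^{-j2πkτ_ℓ/τ}, where H(ω) = ∫_ℝ h(t) e^{-jωt} dt. -/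
open Complex Finset MeasureTheory

/-! Each shifted pulse `h (· - τ_ℓ)` vanishes outside `[0, τ]`, so its Fourier integral over `[0, τ]`
is the one over `ℝ`, which the shift theorem evaluates as `H(ω) e^{-iωτ_ℓ}`; the coefficient
follows by linearity. -/

theorem intervalIntegral_eq_integral_of_support_subset_Icc {E : Type*} [NormedAddCommGroup E]
    [NormedSpace ℝ E] {μ : Measure ℝ} [NullSingletonClass μ] {f : ℝ → E} {a b : ℝ}
    (hf : Function.support f ⊆ Set.Icc a b) :
    ∫ x in a..b, f x ∂μ = ∫ x, f x ∂μ := by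
  rcases le_or_gt a b with hab | hba
  · rw [intervalIntegral.integral_of_le hab, ← integral_Icc_eq_integral_Ioc]
    exact setIntegral_eq_integral_of_forall_compl_eq_zero fun x hx =>
      Function.notMem_support.mp fun hx' => hx (hf hx')
  · have hf0 : f = 0 := Function.support_eq_empty_iff.mp <|
      Set.subset_empty_iff.mp (Set.Icc_eq_empty_of_lt hba ▸ hf)
    simp [hf0]

theorem integral_comp_sub_mul_cexp (h : ℝ → ℂ) (ω : ℂ) (d : ℝ) :
    ∫ t : ℝ, h (t - d) * exp (-I * ω * t) =
      (∫ t : ℝ, h t * exp (-I * ω * t)) * exp (-I * ω * d) := by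
  rw [← integral_mul_const,
    ← integral_sub_right_eq_self (fun t => h t * exp (-I * ω * t) * exp (-I * ω * d)) d]
  congr 1 with t
  simp only [mul_assoc, ← exp_add]
  push_cast
  ring_nf

theorem intervalIntegral_comp_sub_mul_cexp {h : ℝ → ℂ} {τ d : ℝ} (hd : 0 ≤ d)
    (hh : Function.support h ⊆ Set.Icc 0 (τ - d)) (ω : ℂ) :
    ∫ t in (0 : ℝ)..τ, h (t - d) * exp (-I * ω * t) =
      (∫ t : ℝ, h t * exp (-I * ω * t)) * exp (-I * ω * d) := by
  rw [← integral_comp_sub_mul_cexp]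
  refine intervalIntegral_eq_integral_of_support_subset_Icc fun t ht => ?_
  obtain ⟨hdt, htτ⟩ := hh (Function.support_mul_subset_left (fun t => h (t - d)) _ ht)
  constructor <;> linarith

theorem fourier_coeff_of_pulse_stream_general (τ : ℝ) (L : ℕ)
    (h : ℝ → ℂ) (hint : Integrable h)
    (α : Fin L → ℂ) (τd : Fin L → ℝ)
    (hτd : ∀ ℓ, τd ℓ ∈ Set.Ico (0 : ℝ) τ)
    (hsupp : ∀ t : ℝ, h t ≠ 0 → 0 ≤ t ∧ ∀ ℓ, t ≤ τ - τd ℓ)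
    (k : ℤ) :
    (1 / (τ : ℂ)) * ∫ t in (0 : ℝ)..τ,
        (∑ ℓ, α ℓ * h (t - τd ℓ)) *
          Complex.exp (-Complex.I * 2 * Real.pi * (k : ℂ) * (t : ℂ) / (τ : ℂ)) =
      (1 / (τ : ℂ)) *
        (∫ t : ℝ, h t * Complex.exp (-Complex.I * (2 * Real.pi * (k : ℂ) / (τ : ℂ)) * (t : ℂ))) *
        ∑ ℓ, α ℓ * Complex.exp (-Complex.I * 2 * Real.pi * (k : ℂ) * (τd ℓ : ℂ) / (τ : ℂ)) := by
  set ω : ℂ := 2 * Real.pi * k / τ with hω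
  have hexp (x : ℝ) : exp (-I * 2 * Real.pi * k * x / τ) = exp (-I * ω * x) := by
    rw [hω]; ring_nf
  have hpulse (ℓ : Fin L) :
      ∫ t in (0 : ℝ)..τ, α ℓ * h (t - τd ℓ) * exp (-I * ω * t) =
        α ℓ * (∫ t : ℝ, h t * exp (-I * ω * t)) * exp (-I * ω * τd ℓ) := by
    simp only [mul_assoc (α ℓ), intervalIntegral.integral_const_mul]
    rw [intervalIntegral_comp_sub_mul_cexp (hτd ℓ).1
      (fun t ht => ⟨(hsupp t ht).1, (hsupp t ht).2 ℓ⟩) ω]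
  have hint_pulse (ℓ : Fin L) :
      IntervalIntegrable (fun t => α ℓ * h (t - τd ℓ) * exp (-I * ω * t)) volume 0 τ :=
    (((hint.comp_sub_right _).intervalIntegrable).const_mul _).mul_continuousOn (by fun_prop)
  simp_rw [hexp, sum_mul]
  rw [intervalIntegral.integral_finsetSum fun ℓ _ => hint_pulse ℓ, mul_assoc, mul_sum, mul_sum,
    mul_sum]
  exact sum_congr rfl fun ℓ _ => by rw [hpulse]; ring

theorem fourier_coeff_of_pulse_stream (τ : ℝ) (hτ : 0 < τ) (L : ℕ)
    (h : ℝ → ℂ) (hint : Integrable h)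
    (α : Fin L → ℂ) (τd : Fin L → ℝ)
    (hτd : ∀ ℓ, τd ℓ ∈ Set.Ico (0 : ℝ) τ)
    (hsupp : ∀ t : ℝ, h t ≠ 0 → 0 ≤ t ∧ ∀ ℓ, t ≤ τ - τd ℓ)
    (k : ℤ) :
    (1 / (τ : ℂ)) * ∫ t in (0 : ℝ)..τ,
        (∑ ℓ, α ℓ * h (t - τd ℓ)) *
          Complex.exp (-Complex.I * 2 * Real.pi * (k : ℂ) * (t : ℂ) / (τ : ℂ)) =
      (1 / (τ : ℂ)) *
        (∫ t : ℝ, h t * Complex.exp (-Complex.I * (2 * Real.pi * (k : ℂ) / (τ : ℂ)) * (t : ℂ))) *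
        ∑ ℓ, α ℓ * Complex.exp (-Complex.I * 2 * Real.pi * (k : ℂ) * (τd ℓ : ℂ) / (τ : ℂ)) :=
  fourier_coeff_of_pulse_stream_general τ L h hint α τd hτd hsupp k
end

section
/- Fix grid size M ≥ 1 and suppose Doppler frequencies of L targets lie on the grid {2πm/(τM)}. If the number of sampled Fourier coefficients per pulse satisfies |κ| ≥ 2L with κ a set of consecutive integers on which H(2πk/τ) ≠ 0, and P = M pulses are sampled, then the target parameters {α_ℓ, τ_ℓ, ν_ℓ} (with distinct pairs (τ_ℓ, ν_ℓ)) are uniquely determined by the |κ|·M samples {c_p[k]}: for each grid bin m, the focused coefficients Ψ_{ν̃_m}[k] determine an exponential-sum problem with at most L distinct delays, which has a unique solution given 2L consecutive samples. -/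
/-!
After cancelling the nonzero factor `H(2πk/τ)/τ`, the samples form a two-variable exponential sum
`∑ₗ αₗ e^{-2πik₀τₗ/τ} xₗ^j yₗ^p` with delay nodes `xₗ = e^{-2πiτₗ/τ}` and Doppler nodes
`yₗ = e^{-2πimₗ/M}`. Two Vandermonde inversions, in `p` (at most `M` distinct Doppler nodes,
`M` pulses) and in `j` (at most `2L` distinct delay nodes over both parameter sets, `κn ≥ 2L`
coefficients), show that both parameter sets put the same total weight on every node pair.
Delays in `[0, τ)` and bins in `Fin M` are recovered from their nodes, so distinct targets have
distinct node pairs and the weights match target by target.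
-/

open Complex Finset

open scoped Real

theorem Finset.eq_zero_of_forall_sum_mul_pow_eq_zero {R : Type*} [CommRing R] [IsDomain R]
    {T : Finset R} {b : R → R} (h : ∀ j < #T, ∑ w ∈ T, b w * w ^ j = 0) :
    ∀ w ∈ T, b w = 0 := by
  set node : Fin #T → R := fun i => T.equivFin.symm i
  have hnode : Function.Injective node := fun i i' hi =>
    T.equivFin.symm.injective (Subtype.ext hi)
  have hzero : b ∘ node = 0 := by
    refine Matrix.eq_zero_of_forall_pow_sum_mul_pow_eq_zero hnode fun j => ?_
    rw [← h j j.2, ← T.sum_coe_sort]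
    exact T.equivFin.symm.sum_comp fun w : T => b w * (w : R) ^ (j : ℕ)
  intro w hw
  simpa [node] using congrFun hzero (T.equivFin ⟨w, hw⟩)

theorem card_image_union_image_le {ι β : Type*} [Fintype ι] [DecidableEq β] (x x' : ι → β) :
    #(univ.image x ∪ univ.image x') ≤ 2 * Fintype.card ι := by
  have := (card_union_le _ _).trans (add_le_add (card_image_le (s := univ) (f := x))
    (card_image_le (s := univ) (f := x')))
  simpa [two_mul] using this

theorem card_image_comp_union_le {ι κ β : Type*} [Fintype ι] [Fintype κ]
    [DecidableEq β] (g : κ → β) (m m' : ι → κ) :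
    #(univ.image (fun i => g (m i)) ∪ univ.image (fun i => g (m' i))) ≤ Fintype.card κ := by
  have hsub : univ.image (fun i => g (m i)) ∪ univ.image (fun i => g (m' i)) ⊆ univ.image g := by
    intro w
    simp only [mem_union, mem_image, mem_univ, true_and]
    rintro (⟨i, rfl⟩ | ⟨i, rfl⟩) <;> exact ⟨_, rfl⟩
  exact (card_le_card hsub).trans card_image_le

section ExponentialSums

variable {R ι : Type*} [CommRing R] [IsDomain R] [DecidableEq R] [Fintype ι]

theorem sum_fiber_eq_zero_of_forall_sum_mul_pow_eq_zero {c z : ι → R} {n : ℕ}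
    (hz : #(univ.image z) ≤ n) (h : ∀ j < n, ∑ i, c i * z i ^ j = 0) (w : R) :
    ∑ i with z i = w, c i = 0 := by
  by_cases hw : w ∈ univ.image z
  · refine Finset.eq_zero_of_forall_sum_mul_pow_eq_zero (b := fun v => ∑ i with z i = v, c i)
      (fun j hj => ?_) w hw
    rw [← h j (hj.trans_le hz),
      ← sum_fiberwise_of_maps_to (fun i _ => mem_image_of_mem z (mem_univ i))]
    refine sum_congr rfl fun v _ => ?_
    rw [sum_mul]
    exact sum_congr rfl fun i hi => by rw [(mem_filter.1 hi).2]
  · refine sum_eq_zero fun i hi => absurd ?_ hw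
    exact (mem_filter.1 hi).2 ▸ mem_image_of_mem z (mem_univ i)

theorem sum_fiber_prod_eq_zero_of_forall_sum_mul_pow_eq_zero {c x y : ι → R} {n₁ n₂ : ℕ}
    (hx : #(univ.image x) ≤ n₁) (hy : #(univ.image y) ≤ n₂)
    (h : ∀ p < n₁, ∀ q < n₂, ∑ i, c i * x i ^ p * y i ^ q = 0) (w : R × R) :
    ∑ i with (x i, y i) = w, c i = 0 := by
  have hrow : ∀ q < n₂, ∑ i, (if x i = w.1 then c i else 0) * y i ^ q = 0 := fun q hq => by
    have := sum_fiber_eq_zero_of_forall_sum_mul_pow_eq_zero (c := fun i => c i * y i ^ q) hx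
      (fun p hp => by simpa only [mul_right_comm] using h p hp q hq) w.1
    simpa only [sum_filter, ite_mul, zero_mul] using this
  have hcol := sum_fiber_eq_zero_of_forall_sum_mul_pow_eq_zero hy hrow w.2
  rw [sum_filter] at hcol ⊢
  refine (sum_congr rfl fun i _ => ?_).trans hcol
  by_cases hxi : x i = w.1 <;> by_cases hyi : y i = w.2 <;> simp [Prod.ext_iff, hxi, hyi]

theorem sum_fiber_prod_eq_of_forall_sum_mul_pow_eq {c c' x x' y y' : ι → R} {n₁ n₂ : ℕ}
    (hx : #(univ.image x ∪ univ.image x') ≤ n₁) (hy : #(univ.image y ∪ univ.image y') ≤ n₂)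
    (h : ∀ p < n₁, ∀ q < n₂,
      ∑ i, c i * x i ^ p * y i ^ q = ∑ i, c' i * x' i ^ p * y' i ^ q) (w : R × R) :
    ∑ i with (x i, y i) = w, c i = ∑ i with (x' i, y' i) = w, c' i := by
  have himage {f f' : ι → R} : univ.image (Sum.elim f f') = univ.image f ∪ univ.image f' := by
    ext; simp
  have hsum := sum_fiber_prod_eq_zero_of_forall_sum_mul_pow_eq_zero
    (c := Sum.elim c (-c')) (x := Sum.elim x x') (y := Sum.elim y y')
    (himage ▸ hx) (himage ▸ hy)
    (fun p hp q hq => by simp [Fintype.sum_sum_type, h p hp q hq]) w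
  rw [sum_filter, Fintype.sum_sum_type] at hsum
  rw [sum_filter, sum_filter, ← sub_eq_zero, sub_eq_add_neg, ← sum_neg_distrib]
  convert hsum using 3 <;> split_ifs <;> simp_all

end ExponentialSums

theorem exists_equiv_of_sum_fiber_eq {ι β M : Type*} [Fintype ι] [DecidableEq β] [AddCommMonoid M]
    {f f' : ι → β} {c c' : ι → M} (hf : Function.Injective f) (hf' : Function.Injective f')
    (hc : ∀ i, c i ≠ 0) (h : ∀ w, ∑ i with f i = w, c i = ∑ i with f' i = w, c' i) :
    ∃ e : ι ≃ ι, ∀ i, f' (e i) = f i ∧ c' (e i) = c i := by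
  classical
  have hmatch : ∀ i, ∃ i', f' i' = f i ∧ c' i' = c i := by
    intro i
    have hi := h (f i)
    rw [sum_filter, sum_filter] at hi
    simp only [hf.eq_iff, sum_ite_eq', mem_univ, if_true] at hi
    obtain ⟨i', hi'⟩ : ∃ i', f' i' = f i := by
      by_contra! hnone
      simp only [hnone, if_false, sum_const_zero] at hi
      exact hc i hi
    simp only [← hi', hf'.eq_iff, sum_ite_eq', mem_univ, if_true] at hi
    exact ⟨i', hi', hi.symm⟩
  choose g hg using hmatch
  have hg_inj : Function.Injective g := fun i j hij =>
    hf (by rw [← (hg i).1, ← (hg j).1, hij])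
  exact ⟨Equiv.ofBijective g (Finite.injective_iff_bijective.1 hg_inj), hg⟩

noncomputable def expNode (T t : ℝ) : ℂ := cexp (-(2 * π * I) * t / T)

theorem expNode_ne_zero (T t : ℝ) : expNode T t ≠ 0 := exp_ne_zero _

theorem expNode_injOn {T : ℝ} (hT : 0 < T) : Set.InjOn (expNode T) (Set.Ico 0 T) := by
  have hangle : ∀ t ∈ Set.Ico 0 T, -(2 * π * t / T) ∈ Set.Ioc (-(2 * π)) 0 := by
    rintro t ⟨ht0, htT⟩
    rw [mul_div_assoc]
    constructor <;> nlinarith [Real.pi_pos, div_nonneg ht0 hT.le, (div_lt_one hT).2 htT]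
  have hcoe (t : ℝ) : (Circle.exp (-(2 * π * t / T)) : ℂ) = expNode T t := by
    rw [Circle.coe_exp, expNode]
    push_cast
    ring_nf
  intro t ht s hs hts
  have hcircle : Circle.exp (-(2 * π * t / T)) = Circle.exp (-(2 * π * s / T)) :=
    Subtype.ext (by rw [hcoe, hcoe, hts])
  have := Circle.exp_injOn_Ioc (by linarith) (hangle t ht) (hangle s hs) hcircle
  field_simp at this
  linarith [Real.pi_pos]

noncomputable def targetNode (τ : ℝ) {M : ℕ} (t : ℝ) (m : Fin M) : ℂ × ℂ :=
  (expNode τ t, expNode M (m : ℕ))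

theorem targetNode_eq_iff {τ : ℝ} (hτ : 0 < τ) {M : ℕ} {t t' : ℝ} (ht : t ∈ Set.Ico 0 τ)
    (ht' : t' ∈ Set.Ico 0 τ) {m m' : Fin M} :
    targetNode τ t m = targetNode τ t' m' ↔ t = t' ∧ m = m' := by
  have hbin (m : Fin M) : ((m : ℕ) : ℝ) ∈ Set.Ico 0 (M : ℝ) :=
    ⟨Nat.cast_nonneg _, Nat.cast_lt.2 m.2⟩
  constructor
  · intro h
    obtain ⟨hdelay, hdoppler⟩ := Prod.ext_iff.1 h
    exact ⟨expNode_injOn hτ ht ht' hdelay, Fin.ext (Nat.cast_injective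
      (expNode_injOn (Nat.cast_pos.2 m.pos) (hbin m) (hbin m') hdoppler))⟩
  · rintro ⟨rfl, rfl⟩
    rfl

theorem mul_exp_mul_exp_eq_expNode {τ : ℝ} (hτ : τ ≠ 0) {M : ℕ} (a : ℂ) (k0 : ℤ) (j p : ℕ)
    (m : Fin M) (t : ℝ) :
    a * cexp (-I * (2 * π * ((m : ℕ) : ℂ) / ((τ : ℂ) * (M : ℂ))) * (p : ℂ) * (τ : ℂ)) *
        cexp (-I * 2 * π * ((k0 + j : ℤ) : ℂ) * (t : ℂ) / (τ : ℂ)) =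
      a * expNode τ t ^ k0 * expNode τ t ^ j * expNode M (m : ℕ) ^ p := by
  have hM : (M : ℂ) ≠ 0 := Nat.cast_ne_zero.2 m.pos.ne'
  have hτ' : (τ : ℂ) ≠ 0 := ofReal_ne_zero.2 hτ
  simp only [expNode, ← exp_int_mul, ← exp_nat_mul, mul_assoc, ← exp_add]
  congr 2
  push_cast
  field_simp
  ring

theorem doppler_focusing_noiseless_uniqueness_general
    (τ : ℝ) (hτ : 0 < τ) (M L κn : ℕ) (hκ : 2 * L ≤ κn)
    (k0 : ℤ) (H : ℝ → ℂ)
    (hH : ∀ j : ℕ, j < κn → H (2 * Real.pi * (k0 + j : ℤ) / τ) ≠ 0)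
    (α α' : Fin L → ℂ) (τd τd' : Fin L → ℝ) (mb mb' : Fin L → Fin M)
    (hα : ∀ ℓ, α ℓ ≠ 0)
    (hτd : ∀ ℓ, τd ℓ ∈ Set.Ico (0 : ℝ) τ) (hτd' : ∀ ℓ, τd' ℓ ∈ Set.Ico (0 : ℝ) τ)
    (hdistinct : Function.Injective (fun ℓ => (τd ℓ, mb ℓ)))
    (hdistinct' : Function.Injective (fun ℓ => (τd' ℓ, mb' ℓ)))
    (hsamples : ∀ p : ℕ, p < M → ∀ j : ℕ, j < κn →
      (1 / (τ : ℂ)) * H (2 * Real.pi * (k0 + j : ℤ) / τ) *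
        ∑ ℓ, α ℓ *
          Complex.exp (-Complex.I * (2 * Real.pi * ((mb ℓ : ℕ) : ℂ) / ((τ : ℂ) * (M : ℂ))) *
            (p : ℂ) * (τ : ℂ)) *
          Complex.exp (-Complex.I * 2 * Real.pi * ((k0 + j : ℤ) : ℂ) * (τd ℓ : ℂ) / (τ : ℂ)) =
      (1 / (τ : ℂ)) * H (2 * Real.pi * (k0 + j : ℤ) / τ) *
        ∑ ℓ, α' ℓ *
          Complex.exp (-Complex.I * (2 * Real.pi * ((mb' ℓ : ℕ) : ℂ) / ((τ : ℂ) * (M : ℂ))) *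
            (p : ℂ) * (τ : ℂ)) *
          Complex.exp (-Complex.I * 2 * Real.pi * ((k0 + j : ℤ) : ℂ) * (τd' ℓ : ℂ) / (τ : ℂ))) :
    ∃ e : Fin L ≃ Fin L, ∀ ℓ, α' (e ℓ) = α ℓ ∧ τd' (e ℓ) = τd ℓ ∧ mb' (e ℓ) = mb ℓ := by
  classical
  have hfiber (w : ℂ × ℂ) :
      ∑ ℓ with targetNode τ (τd ℓ) (mb ℓ) = w, α ℓ * expNode τ (τd ℓ) ^ k0 =
        ∑ ℓ with targetNode τ (τd' ℓ) (mb' ℓ) = w, α' ℓ * expNode τ (τd' ℓ) ^ k0 := by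
    refine sum_fiber_prod_eq_of_forall_sum_mul_pow_eq (n₁ := κn) (n₂ := M)
      ((card_image_union_image_le _ _).trans (by simpa using hκ))
      ((card_image_comp_union_le (fun m : Fin M => expNode M (m : ℕ)) mb mb').trans
        (by simp))
      (fun j hj p hp => ?_) w
    have hfactor : (1 / (τ : ℂ)) * H (2 * Real.pi * (k0 + j : ℤ) / τ) ≠ 0 :=
      mul_ne_zero (one_div_ne_zero (ofReal_ne_zero.2 hτ.ne')) (hH j hj)
    simpa only [mul_exp_mul_exp_eq_expNode hτ.ne'] using
      mul_left_cancel₀ hfactor (hsamples p hp j hj)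
  obtain ⟨e, he⟩ := exists_equiv_of_sum_fiber_eq
    (fun ℓ ℓ' h => hdistinct (Prod.ext_iff.2 ((targetNode_eq_iff hτ (hτd ℓ) (hτd ℓ')).1 h)))
    (fun ℓ ℓ' h => hdistinct' (Prod.ext_iff.2 ((targetNode_eq_iff hτ (hτd' ℓ) (hτd' ℓ')).1 h)))
    (fun ℓ => mul_ne_zero (hα ℓ) (zpow_ne_zero _ (expNode_ne_zero _ _))) hfiber
  refine ⟨e, fun ℓ => ?_⟩
  obtain ⟨hnode, hcoeff⟩ := he ℓ
  obtain ⟨hdelay, hbin⟩ := (targetNode_eq_iff hτ (hτd' (e ℓ)) (hτd ℓ)).1 hnode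
  rw [hdelay] at hcoeff
  exact ⟨mul_right_cancel₀ (zpow_ne_zero _ (expNode_ne_zero _ _)) hcoeff, hdelay, hbin⟩

/-- Theorem 3 (achievability): with Doppler frequencies on a grid of size `M`, `P = M`
pulses and `κn ≥ 2L` consecutive Fourier coefficients `k₀, k₀+1, …` on which the pulse
spectrum does not vanish, the `κn·M` samples `c_p[k]` determine the target parameters
uniquely (up to relabeling of the `L` targets). -/
theorem doppler_focusing_noiseless_uniqueness
    (τ : ℝ) (hτ : 0 < τ) (M L κn : ℕ) (hM : 1 ≤ M) (hκ : 2 * L ≤ κn)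
    (k0 : ℤ) (H : ℝ → ℂ)
    (hH : ∀ j : ℕ, j < κn → H (2 * Real.pi * (k0 + j : ℤ) / τ) ≠ 0)
    (α α' : Fin L → ℂ) (τd τd' : Fin L → ℝ) (mb mb' : Fin L → Fin M)
    (hα : ∀ ℓ, α ℓ ≠ 0) (hα' : ∀ ℓ, α' ℓ ≠ 0)
    (hτd : ∀ ℓ, τd ℓ ∈ Set.Ico (0 : ℝ) τ) (hτd' : ∀ ℓ, τd' ℓ ∈ Set.Ico (0 : ℝ) τ)
    (hdistinct : Function.Injective (fun ℓ => (τd ℓ, mb ℓ)))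
    (hdistinct' : Function.Injective (fun ℓ => (τd' ℓ, mb' ℓ)))
    (hsamples : ∀ p : ℕ, p < M → ∀ j : ℕ, j < κn →
      (1 / (τ : ℂ)) * H (2 * Real.pi * (k0 + j : ℤ) / τ) *
        ∑ ℓ, α ℓ *
          Complex.exp (-Complex.I * (2 * Real.pi * ((mb ℓ : ℕ) : ℂ) / ((τ : ℂ) * (M : ℂ))) *
            (p : ℂ) * (τ : ℂ)) *
          Complex.exp (-Complex.I * 2 * Real.pi * ((k0 + j : ℤ) : ℂ) * (τd ℓ : ℂ) / (τ : ℂ)) =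
      (1 / (τ : ℂ)) * H (2 * Real.pi * (k0 + j : ℤ) / τ) *
        ∑ ℓ, α' ℓ *
          Complex.exp (-Complex.I * (2 * Real.pi * ((mb' ℓ : ℕ) : ℂ) / ((τ : ℂ) * (M : ℂ))) *
            (p : ℂ) * (τ : ℂ)) *
          Complex.exp (-Complex.I * 2 * Real.pi * ((k0 + j : ℤ) : ℂ) * (τd' ℓ : ℂ) / (τ : ℂ))) :
    ∃ e : Fin L ≃ Fin L, ∀ ℓ, α' (e ℓ) = α ℓ ∧ τd' (e ℓ) = τd ℓ ∧ mb' (e ℓ) = mb ℓ :=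
  doppler_focusing_noiseless_uniqueness_general τ hτ M L κn hκ k0 H hH α α' τd τd' mb mb' hα hτd
    hτd' hdistinct hdistinct' hsamples
end
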